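/- arXiv:2411.14094 — 2 statements merged into one kernel-verified Lean document; each statement's English description precedes it below -/
import Mathlib

section
/- The Jaccard distance d(S,T) = 1 − |S∩T|/|S∪T| on nonempty finite subsets of a type satisfies the triangle inequality: d(S,U) ≤ d(S,T) + d(T,U). -/
set_option maxHeartbeats 1000000

private lemma frac_mono {x y k : ℝ} (hxy : x ≤ y) (hy : 0 < y) (hk : 0 ≤ k) :
    x / y ≤ (x + k) / (y + k) := by
  rw [div_le_div_iff₀ hy (by linarith)]
  nlinarith

/-- The Jaccard distance `d(S,T) = 1 − |S∩T|/|S∪T|` (with `d(S,T) = 0` when both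
sets are empty) satisfies the triangle inequality. -/
theorem stmt_5 {α : Type*} [DecidableEq α]
    (d : Finset α → Finset α → ℝ)
    (hd : ∀ S T, d S T = if S = ∅ ∧ T = ∅ then 0
      else 1 - ((S ∩ T).card : ℝ) / ((S ∪ T).card : ℝ))
    (S T U : Finset α) :
    d S U ≤ d S T + d T U := by
  have hnonneg : ∀ A B : Finset α, 0 ≤ d A B := by
    intro A B
    rw [hd]
    split
    · exact le_refl 0
    · have hsub : A ∩ B ⊆ A ∪ B :=
        Finset.inter_subset_left.trans Finset.subset_union_left
      have h1 : ((A ∩ B).card : ℝ) / ((A ∪ B).card : ℝ) ≤ 1 := by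
        rcases Nat.eq_zero_or_pos (A ∪ B).card with h | h
        · simp [h]
        · rw [div_le_one (by exact_mod_cast h)]
          exact_mod_cast Finset.card_le_card hsub
      linarith
  have dform : ∀ A B : Finset α, A ∪ B ≠ ∅ →
      d A B = (((A \ B) ∪ (B \ A)).card : ℝ) / ((A ∪ B).card : ℝ) := by
    intro A B h
    rw [hd, if_neg (by simpa [Finset.union_eq_empty] using h)]
    have hsub : A ∩ B ⊆ A ∪ B :=
      Finset.inter_subset_left.trans Finset.subset_union_left
    have hset : (A \ B) ∪ (B \ A) = (A ∪ B) \ (A ∩ B) := by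
      ext x; simp; tauto
    have hle : (A ∩ B).card ≤ (A ∪ B).card := Finset.card_le_card hsub
    have hpos : (0:ℝ) < ((A ∪ B).card : ℝ) := by
      exact_mod_cast Finset.card_pos.mpr (Finset.nonempty_iff_ne_empty.mpr h)
    rw [hset, Finset.card_sdiff_of_subset hsub]
    rw [Nat.cast_sub hle]
    field_simp
  by_cases hST : S = ∅ ∧ T = ∅
  · obtain ⟨h1, h2⟩ := hST
    subst h1; subst h2
    rw [hd ∅ ∅]; simp
  by_cases hTU : T = ∅ ∧ U = ∅
  · obtain ⟨h1, h2⟩ := hTU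
    subst h1; subst h2
    rw [hd ∅ ∅]; simp
  by_cases hSU : S = ∅ ∧ U = ∅
  · rw [hd S U, if_pos hSU]
    have := hnonneg S T
    have := hnonneg T U
    linarith
  -- main case
  have hSU' : S ∪ U ≠ ∅ := by simpa [Finset.union_eq_empty] using hSU
  have hST' : S ∪ T ≠ ∅ := by simpa [Finset.union_eq_empty] using hST
  have hTU' : T ∪ U ≠ ∅ := by simpa [Finset.union_eq_empty] using hTU
  have hposSU : (0:ℝ) < ((S ∪ U).card : ℝ) := by
    exact_mod_cast Finset.card_pos.mpr (Finset.nonempty_iff_ne_empty.mpr hSU')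
  have hposST : (0:ℝ) < ((S ∪ T).card : ℝ) := by
    exact_mod_cast Finset.card_pos.mpr (Finset.nonempty_iff_ne_empty.mpr hST')
  have hposTU : (0:ℝ) < ((T ∪ U).card : ℝ) := by
    exact_mod_cast Finset.card_pos.mpr (Finset.nonempty_iff_ne_empty.mpr hTU')
  have hn : (S ∪ U).card + (T \ (S ∪ U)).card = (S ∪ T ∪ U).card := by
    rw [← Finset.card_union_of_disjoint Finset.disjoint_sdiff]
    congr 1
    ext x; simp; tauto
  have hSUle : (S ∪ U).card ≤ (S ∪ T ∪ U).card :=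
    Finset.card_le_card (by intro x; simp; tauto)
  have hposn : (0:ℝ) < ((S ∪ T ∪ U).card : ℝ) :=
    lt_of_lt_of_le hposSU (by exact_mod_cast hSUle)
  have hkey : ((S \ U) ∪ (U \ S)).card + (T \ (S ∪ U)).card
      ≤ ((S \ T) ∪ (T \ S)).card + ((T \ U) ∪ (U \ T)).card := by
    calc ((S \ U) ∪ (U \ S)).card + (T \ (S ∪ U)).card
        ≤ (((S \ T) ∪ (T \ S)) ∪ ((T \ U) ∪ (U \ T))).card
          + (((S \ T) ∪ (T \ S)) ∩ ((T \ U) ∪ (U \ T))).card := by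
          apply add_le_add
          · apply Finset.card_le_card; intro x hx; simp at hx ⊢; tauto
          · apply Finset.card_le_card; intro x hx; simp at hx ⊢; tauto
      _ = ((S \ T) ∪ (T \ S)).card + ((T \ U) ∪ (U \ T)).card :=
          Finset.card_union_add_card_inter _ _
  have hDSUsub : ((S \ U) ∪ (U \ S)).card ≤ (S ∪ U).card :=
    Finset.card_le_card (by intro x hx; simp at hx ⊢; tauto)
  have hSTle : ((S ∪ T).card : ℝ) ≤ ((S ∪ T ∪ U).card : ℝ) := by
    exact_mod_cast Finset.card_le_card (by intro x; simp; tauto)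
  have hTUle : ((T ∪ U).card : ℝ) ≤ ((S ∪ T ∪ U).card : ℝ) := by
    exact_mod_cast Finset.card_le_card (by intro x; simp; tauto)
  rw [dform S U hSU', dform S T hST', dform T U hTU']
  calc (((S \ U) ∪ (U \ S)).card : ℝ) / ((S ∪ U).card : ℝ)
      ≤ ((((S \ U) ∪ (U \ S)).card : ℝ) + ((T \ (S ∪ U)).card : ℝ))
          / (((S ∪ U).card : ℝ) + ((T \ (S ∪ U)).card : ℝ)) :=
        frac_mono (by exact_mod_cast hDSUsub) hposSU (by positivity)
    _ = ((((S \ U) ∪ (U \ S)).card : ℝ) + ((T \ (S ∪ U)).card : ℝ))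
          / ((S ∪ T ∪ U).card : ℝ) := by rw [← hn]; push_cast; ring_nf
    _ ≤ ((((S \ T) ∪ (T \ S)).card : ℝ) + (((T \ U) ∪ (U \ T)).card : ℝ))
          / ((S ∪ T ∪ U).card : ℝ) := by
        apply div_le_div_of_nonneg_right ?_ ?_ |>.trans_eq rfl
        · exact_mod_cast hkey
        · exact hposn.le
    _ = (((S \ T) ∪ (T \ S)).card : ℝ) / ((S ∪ T ∪ U).card : ℝ)
          + (((T \ U) ∪ (U \ T)).card : ℝ) / ((S ∪ T ∪ U).card : ℝ) := by ring
    _ ≤ (((S \ T) ∪ (T \ S)).card : ℝ) / ((S ∪ T).card : ℝ)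
          + (((T \ U) ∪ (U \ T)).card : ℝ) / ((T ∪ U).card : ℝ) := by
        gcongr <;> positivity
end

section
/- If two vertices v and v' of possibly different graphs have isomorphic rooted computational trees of depth K (i.e., there is an isomorphism of their depth-K unfolding trees preserving node features), then for every K-layer message-passing GNN, h_v^{(K)} = h_{v'}^{(K)}. -/
/-! The `K`-layer representation of a vertex depends only on its depth-`K` unfolding tree:
running the message-passing recursion on the tree itself, reading the root's previous
representation off the tree truncated by one level, reproduces `h_v^{(K)}`. Equal trees
therefore give equal representations. -/

/-- The type of depth-`K` computational (unfolding) trees with node features in `X`: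
a depth-`0` tree is just a feature, a depth-`(K+1)` tree is a root feature together
with a multiset of depth-`K` subtrees. Equality of these canonical objects is exactly
feature-preserving isomorphism of rooted unfolding trees. -/
def CompTree (X : Type*) : ℕ → Type _
  | 0 => X
  | K + 1 => X × Multiset (CompTree X K)

/-- The depth-`K` computational tree of a vertex `v`: its root carries `x v` and its
children are the depth-`(K-1)` trees of the neighbors of `v` (with multiplicity). -/
def unfoldTree {V X : Type*} [Fintype V] (G : SimpleGraph V) [DecidableRel G.Adj]
    (x : V → X) : (K : ℕ) → V → CompTree X K
  | 0, v => x v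
  | K + 1, v => (x v, ((G.neighborFinset v).val.map (unfoldTree G x K)))

namespace CompTree

variable {X Z : Type*}

def trunc : (K : ℕ) → CompTree X (K + 1) → CompTree X K
  | 0, t => t.1
  | K + 1, t => (t.1, t.2.map (trunc K))

def eval (AGG : Multiset X → Z) (COMB : X → Z → X) : (K : ℕ) → CompTree X K → X
  | 0, t => t
  | K + 1, t => COMB (eval AGG COMB K (trunc K t)) (AGG (t.2.map (eval AGG COMB K)))

theorem trunc_unfoldTree {V : Type*} [Fintype V] (G : SimpleGraph V) [DecidableRel G.Adj]
    (x : V → X) (K : ℕ) (v : V) :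
    trunc K (unfoldTree G x (K + 1) v) = unfoldTree G x K v := by
  induction K generalizing v with
  | zero => rfl
  | succ K ih =>
    rw [unfoldTree, unfoldTree]
    exact congrArg _ ((Multiset.map_map _ _ _).trans (Multiset.map_congr rfl fun w _ => ih w))

theorem eq_eval_unfoldTree {V : Type*} [Fintype V] (G : SimpleGraph V) [DecidableRel G.Adj]
    (x : V → X) (AGG : Multiset X → Z) (COMB : X → Z → X) (h : ℕ → V → X)
    (h0 : ∀ v, h 0 v = x v)
    (hrec : ∀ K v, h (K + 1) v = COMB (h K v) (AGG ((G.neighborFinset v).val.map (h K))))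
    (K : ℕ) (v : V) :
    h K v = eval AGG COMB K (unfoldTree G x K v) := by
  induction K generalizing v with
  | zero => exact h0 v
  | succ K ih =>
    rw [hrec, eval, trunc_unfoldTree, ← ih]
    simp only [unfoldTree, Multiset.map_map]
    exact congrArg _ (congrArg AGG (Multiset.map_congr rfl fun w _ => ih w))

end CompTree

/-- If two vertices (of possibly different graphs) have isomorphic depth-`K`
computational trees, then every `K`-layer message-passing GNN gives them the same
representation. -/
theorem stmt_9 {V₁ V₂ X Z : Type*} [Fintype V₁] [Fintype V₂]
    (G₁ : SimpleGraph V₁) [DecidableRel G₁.Adj]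
    (G₂ : SimpleGraph V₂) [DecidableRel G₂.Adj]
    (x₁ : V₁ → X) (x₂ : V₂ → X)
    (AGG : Multiset X → Z) (COMB : X → Z → X)
    (h₁ : ℕ → V₁ → X) (h₂ : ℕ → V₂ → X)
    (h₁0 : ∀ v, h₁ 0 v = x₁ v)
    (h₁rec : ∀ K v, h₁ (K + 1) v =
      COMB (h₁ K v) (AGG ((G₁.neighborFinset v).val.map (h₁ K))))
    (h₂0 : ∀ v, h₂ 0 v = x₂ v)
    (h₂rec : ∀ K v, h₂ (K + 1) v =
      COMB (h₂ K v) (AGG ((G₂.neighborFinset v).val.map (h₂ K))))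
    (K : ℕ) (v₁ : V₁) (v₂ : V₂)
    (htree : unfoldTree G₁ x₁ K v₁ = unfoldTree G₂ x₂ K v₂) :
    h₁ K v₁ = h₂ K v₂ := by
  rw [CompTree.eq_eval_unfoldTree G₁ x₁ AGG COMB h₁ h₁0 h₁rec,
    CompTree.eq_eval_unfoldTree G₂ x₂ AGG COMB h₂ h₂0 h₂rec, htree]
end
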